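/- arXiv:2209.02844 — 2 statements merged into one kernel-verified Lean document; each statement's English description precedes it below -/
import Mathlib

section
/- Suppose the cluster size distribution is a shifted Poisson: μ_k = λ^{k−1} e^{−λ}/(k−1)! for k ≥ 1 and μ_0 = 0, where λ > 0. Then for every integer n ≥ 1, P[E_n] = Σ_{k=1}^{n} e^{−kλ} (kλ)^{n−k}/(n−k)!. -/
/-!
Writing `S j = 1 + T j`, the `T j` are i.i.d. Poisson(λ), so by the convolution identity for
Poisson laws `∑_{j<K} S j = K + Poisson(Kλ)`. Since the partial sums of the positive `S j` are
strictly increasing, `E_n` is the disjoint union over `1 ≤ K ≤ n` of the events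
`∑_{j<K} S j = n`, whose probabilities are the summands `e^{-Kλ} (Kλ)^{n-K} / (n-K)!`.
-/

open MeasureTheory ProbabilityTheory Finset
open scoped NNReal

theorem ProbabilityTheory.poissonMeasure_zero : poissonMeasure 0 = Measure.dirac 0 := by
  refine Measure.ext_of_singleton fun n => ?_
  rcases eq_or_ne n 0 with rfl | hn
  · simp [poissonMeasure_singleton]
  · simp [poissonMeasure_singleton, hn]

theorem ProbabilityTheory.hasLaw_poissonMeasure_of_measureReal {Ω : Type*} [MeasurableSpace Ω]
    {P : Measure Ω} [IsFiniteMeasure P] {X : Ω → ℕ} (hX : Measurable X) {r : ℝ≥0}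
    (h : ∀ i, P.real {ω | X ω = i} = Real.exp (-r) * r ^ i / i.factorial) :
    HasLaw X (poissonMeasure r) P := by
  refine ⟨hX.aemeasurable, Measure.ext_of_singleton fun i => ?_⟩
  rw [Measure.map_apply hX (measurableSet_singleton i), poissonMeasure_singleton, ← h,
    measureReal_def, ENNReal.ofReal_toReal (measure_ne_top _ _)]
  rfl

theorem ProbabilityTheory.iIndepFun.hasLaw_sum_range_poissonMeasure {Ω : Type*}
    [MeasurableSpace Ω] {P : Measure Ω} [IsProbabilityMeasure P] {X : ℕ → Ω → ℕ}
    (hmeas : ∀ i, Measurable (X i)) (hindep : iIndepFun X P) {r : ℝ≥0}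
    (hX : ∀ i, HasLaw (X i) (poissonMeasure r) P) (K : ℕ) :
    HasLaw (∑ j ∈ range K, X j) (poissonMeasure (K * r)) P := by
  induction K with
  | zero =>
    simpa [poissonMeasure_zero] using hasLaw_dirac_of_ae_eq (X := (0 : Ω → ℕ)) (x := 0) (by rfl)
  | succ K ih =>
    rw [sum_range_succ, Nat.cast_succ, add_one_mul]
    exact (hindep.indepFun_sum_range_succ hmeas K).hasLaw_add_poissonMeasure ih (hX K)

theorem Finset.strictMono_sum_range_of_pos {f : ℕ → ℕ} (hf : ∀ j, 0 < f j) :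
    StrictMono fun K => ∑ j ∈ range K, f j :=
  strictMono_nat_of_lt_succ fun K => by simpa [sum_range_succ] using hf K

theorem Finset.sum_range_eq_iff_sum_range_sub_one_eq {f : ℕ → ℕ} (hf : ∀ j, 0 < f j)
    {K n : ℕ} (hK : K ≤ n) :
    ∑ j ∈ range K, f j = n ↔ ∑ j ∈ range K, (f j - 1) = n - K := by
  have hsum : ∑ j ∈ range K, f j = ∑ j ∈ range K, (f j - 1) + K := by
    calc ∑ j ∈ range K, f j = ∑ j ∈ range K, (f j - 1 + 1) :=
          sum_congr rfl fun j _ => (Nat.sub_add_cancel (hf j)).symm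
      _ = ∑ j ∈ range K, (f j - 1) + K := by simp [sum_add_distrib]
  omega

theorem MeasureTheory.measure_exists_sum_range_eq {Ω : Type*} [MeasurableSpace Ω] (P : Measure Ω)
    {S : ℕ → Ω → ℕ} (hmeas : ∀ i, Measurable (S i)) (hpos : ∀ i ω, 0 < S i ω) {n : ℕ}
    (hn : 1 ≤ n) :
    P {ω | ∃ K, ∑ j ∈ range K, S j ω = n}
      = ∑ K ∈ Icc 1 n, P {ω | ∑ j ∈ range K, S j ω = n} := by
  have hmono (ω : Ω) := strictMono_sum_range_of_pos (hpos · ω)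
  have hset : {ω | ∃ K, ∑ j ∈ range K, S j ω = n}
      = ⋃ K ∈ Icc 1 n, {ω | ∑ j ∈ range K, S j ω = n} := by
    ext ω
    simp only [Set.mem_ofPred_eq, Set.mem_iUnion, mem_Icc, exists_prop]
    constructor
    · rintro ⟨K, hK⟩
      refine ⟨K, ⟨Nat.pos_of_ne_zero ?_, hK ▸ (hmono ω).id_le K⟩, hK⟩
      rintro rfl
      simp at hK
      omega
    · rintro ⟨K, -, hK⟩
      exact ⟨K, hK⟩
  rw [hset]
  refine measure_biUnion_finset (fun a _ b _ hab => Set.disjoint_left.mpr fun ω ha hb => ?_)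
    fun K _ => (measurableSet_singleton n).preimage (Finset.measurable_sum _ fun i _ => hmeas i)
  exact hab ((hmono ω).injective (ha.trans hb.symm))

/-- If cluster sizes are shifted Poisson,
`μ_k = λ^{k−1} e^{−λ}/(k−1)!` for `k ≥ 1` with `λ > 0`, then for every `n ≥ 1`,
`P[E_n] = ∑_{k=1}^n e^{−kλ} (kλ)^{n−k}/(n−k)!`. -/
theorem esc_poisson_prob_event
    {Ω : Type*} [MeasurableSpace Ω] (P : Measure Ω) [IsProbabilityMeasure P]
    (S : ℕ → Ω → ℕ)
    (hmeas : ∀ i, Measurable (S i))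
    (hindep : iIndepFun S P)
    (hident : ∀ i, IdentDistrib (S i) (S 0) P P)
    (hpos : ∀ i ω, 0 < S i ω)
    (μ : ℕ → ℝ)
    (hμ : ∀ s, μ s = (P {ω | S 0 ω = s}).toReal)
    (E : ℕ → Set Ω)
    (hE : ∀ n, E n = {ω | ∃ K, ∑ j ∈ Finset.range K, S j ω = n})
    (lam : ℝ) (hlam : 0 < lam)
    (hform : ∀ k : ℕ, 1 ≤ k →
      μ k = lam ^ (k - 1) * Real.exp (-lam) / (k - 1).factorial)
    (n : ℕ) (hn : 1 ≤ n) :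
    (P (E n)).toReal
      = ∑ k ∈ Finset.Icc 1 n,
          Real.exp (-(k * lam)) * (k * lam) ^ (n - k) / (n - k).factorial := by
  obtain ⟨r, rfl⟩ : ∃ r : ℝ≥0, (r : ℝ) = lam := ⟨⟨lam, hlam.le⟩, rfl⟩
  let T (j : ℕ) (ω : Ω) : ℕ := S j ω - 1
  have hTmeas (j : ℕ) : Measurable (T j) := (hmeas j).sub_const 1
  have hT0 : HasLaw (T 0) (poissonMeasure r) P := by
    refine hasLaw_poissonMeasure_of_measureReal (hTmeas 0) fun i => ?_
    have hset : {ω | T 0 ω = i} = {ω | S 0 ω = i + 1} := by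
      ext ω; have := hpos 0 ω; simp only [T, Set.mem_ofPred_eq]; omega
    rw [hset, measureReal_def, ← hμ, hform _ (by omega), Nat.add_sub_cancel]
    ring
  have hT (j : ℕ) : HasLaw (T j) (poissonMeasure r) P :=
    ((hident j).comp (u := fun s => s - 1) measurable_from_nat).symm.hasLaw hT0
  have hTsum := (hindep.comp (fun _ s => s - 1) fun _ => measurable_from_nat)
    |>.hasLaw_sum_range_poissonMeasure hTmeas hT
  rw [hE n, measure_exists_sum_range_eq P hmeas hpos hn,
    ENNReal.toReal_sum fun _ _ => measure_ne_top _ _]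
  refine sum_congr rfl fun K hK => ?_
  have hset : {ω | ∑ j ∈ range K, S j ω = n} = {ω | (∑ j ∈ range K, T j) ω = n - K} := by
    ext ω
    simpa only [Set.mem_ofPred_eq, Finset.sum_apply] using
      sum_range_eq_iff_sum_range_sub_one_eq (hpos · ω) (mem_Icc.mp hK).2
  rw [hset, ← measureReal_def, (hTsum K).measureReal_eq (p := (· = n - K))
    (measurableSet_singleton _), Set.ofPred_eq_eq_singleton, poissonMeasure_real_singleton]
  simp
end

section
/- Suppose the cluster size distribution is a shifted negative binomial: μ_k = C(k+r−2, k−1) (1−p)^r p^{k−1} for k ≥ 1 and μ_0 = 0, where p ∈ (0,1), r > 0 is real, and C(t, m) = (t)_m / m! with (t)_m the falling factorial. Then for every integer n ≥ 1, P[E_n] = p^n Σ_{k=1}^{n} ((1−p)^r / p)^k · C(n + k(r−1) − 1, n−k). -/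
/-!
Partial sums of positive cluster sizes strictly increase, so `E n` is the disjoint union over
`1 ≤ k ≤ n` of the events `S₀ + ⋯ + S_{k-1} = n`. By independence the generating series of that
sum is the `k`-th power of the generating series `c X (1 - p X)^(-r)` of one cluster, with
`c = (1 - p)^r`. Hence it is `c^k X^k (1 - p X)^(-k r)`, whose `n`-th coefficient is read off
from the binomial series via `C(-a, j) = (-1)^j C(j + a - 1, j)`.
-/

open MeasureTheory ProbabilityTheory

/-- Generalized binomial coefficient `C(t, m) = t(t−1)⋯(t−m+1)/m!` for real `t`
and natural `m`. -/
noncomputable def genChoose (t : ℝ) (m : ℕ) : ℝ :=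
  (∏ i ∈ Finset.range m, (t - i)) / m.factorial

open Finset PowerSeries

lemma genChoose_eq_ringChoose (t : ℝ) (m : ℕ) : genChoose t m = Ring.choose t m := by
  rw [Ring.choose_eq_smul, genChoose, smul_eq_mul, ← Polynomial.aeval_eq_smeval,
    Polynomial.aeval_def, Polynomial.eval₂_eq_eval_map, descPochhammer_map,
    descPochhammer_eval_eq_prod_range, inv_mul_eq_div]

lemma ringChoose_neg_eq_neg_one_pow_mul_genChoose (a : ℝ) (j : ℕ) :
    Ring.choose (-a) j = (-1) ^ j * genChoose (j + a - 1) j := by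
  rw [Ring.choose_neg, Units.smul_def, zsmul_eq_mul, Int.cast_negOnePow_natCast,
    genChoose_eq_ringChoose, add_comm (j : ℝ)]

lemma binomialSeries_nsmul {R A : Type*} [CommRing R] [BinomialRing R] [Ring A] [Algebra R A]
    (r : R) (k : ℕ) : binomialSeries A (k • r) = binomialSeries A r ^ k := by
  induction k with
  | zero => simp
  | succ k ih => rw [succ_nsmul, binomialSeries_add, ih, pow_succ]

lemma coeff_rescale_binomialSeries_neg (a p : ℝ) (j : ℕ) :
    coeff j (rescale (-p) (binomialSeries ℝ (-a))) = genChoose (j + a - 1) j * p ^ j := by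
  rw [coeff_rescale, binomialSeries_coeff, smul_eq_mul, mul_one,
    ringChoose_neg_eq_neg_one_pow_mul_genChoose, neg_pow, mul_mul_mul_comm, ← mul_pow,
    neg_one_mul, neg_neg, one_pow, one_mul, mul_comm]

/-- `c X (1 - p X)^(-r)`: `rescale (-p)` substitutes `-p X` for `X` in `(1 + X)^(-r)`. -/
noncomputable def shiftedNegBinomialSeries (c p r : ℝ) : ℝ⟦X⟧ :=
  X * (C c * rescale (-p) (binomialSeries ℝ (-r)))

lemma mk_eq_shiftedNegBinomialSeries {c p r : ℝ} {q : ℕ → ℝ} (hq0 : q 0 = 0)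
    (hq : ∀ k, 1 ≤ k → q k = genChoose (k + r - 2) (k - 1) * c * p ^ (k - 1)) :
    mk q = shiftedNegBinomialSeries c p r := by
  ext (_ | j)
  · simp [shiftedNegBinomialSeries, hq0]
  · have harg : ((j + 1 : ℕ) : ℝ) + r - 2 = j + r - 1 := by push_cast; ring
    rw [coeff_mk, hq (j + 1) j.succ_pos, shiftedNegBinomialSeries, coeff_succ_X_mul, coeff_C_mul,
      coeff_rescale_binomialSeries_neg, Nat.add_sub_cancel, harg]
    ring

lemma coeff_shiftedNegBinomialSeries_pow (c p r : ℝ) {k n : ℕ} (hkn : k ≤ n) :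
    coeff n (shiftedNegBinomialSeries c p r ^ k)
      = c ^ k * p ^ (n - k) * genChoose (n + k * (r - 1) - 1) (n - k) := by
  have harg : ((n - k : ℕ) : ℝ) + k • r - 1 = n + k * (r - 1) - 1 := by
    rw [Nat.cast_sub hkn, nsmul_eq_mul]
    ring
  rw [shiftedNegBinomialSeries, mul_pow, mul_pow, ← map_pow, ← map_pow, ← binomialSeries_nsmul,
    smul_neg, coeff_X_pow_mul', if_pos hkn, coeff_C_mul, coeff_rescale_binomialSeries_neg, harg]
  ring

namespace ProbabilityTheory

variable {Ω : Type*} [MeasurableSpace Ω] (P : Measure Ω)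

noncomputable def pmfSeries (Y : Ω → ℕ) : ℝ⟦X⟧ :=
  mk fun m => P.real (Y ⁻¹' {m})

variable {P}

lemma pmfSeries_zero [IsProbabilityMeasure P] : pmfSeries P 0 = 1 := by
  ext m
  rcases eq_or_ne m 0 with rfl | hm
  · simp [pmfSeries, Set.preimage]
  · simp [pmfSeries, hm, Set.preimage, eq_comm]

lemma IdentDistrib.pmfSeries_eq {Y Z : Ω → ℕ} (h : IdentDistrib Y Z P P) :
    pmfSeries P Y = pmfSeries P Z := by
  ext m
  simp only [pmfSeries, coeff_mk, measureReal_def, h.measure_mem_eq (measurableSet_singleton m)]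

lemma IndepFun.pmfSeries_add [IsFiniteMeasure P] {Y Z : Ω → ℕ} (hY : Measurable Y)
    (hZ : Measurable Z) (h : IndepFun Y Z P) :
    pmfSeries P (Y + Z) = pmfSeries P Y * pmfSeries P Z := by
  ext m
  have hsplit : (Y + Z) ⁻¹' {m} = ⋃ ab ∈ antidiagonal m, Y ⁻¹' {ab.1} ∩ Z ⁻¹' {ab.2} := by
    ext ω
    simp
  have hdisj : (antidiagonal m : Set (ℕ × ℕ)).PairwiseDisjoint
      fun ab => Y ⁻¹' {ab.1} ∩ Z ⁻¹' {ab.2} := by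
    intro ab _ ab' _ hne
    refine Set.disjoint_left.mpr fun ω hω hω' => hne ?_
    simp_all [Prod.ext_iff]
  rw [pmfSeries, pmfSeries, coeff_mk, coeff_mul, hsplit, measureReal_biUnion_finset hdisj
    fun ab _ => (hY (measurableSet_singleton _)).inter (hZ (measurableSet_singleton _))]
  refine sum_congr rfl fun ab _ => ?_
  simp only [pmfSeries, coeff_mk, measureReal_def, h.measure_inter_preimage_eq_mul _ _
    (measurableSet_singleton _) (measurableSet_singleton _), ENNReal.toReal_mul]

lemma iIndepFun.pmfSeries_sum_range [IsProbabilityMeasure P] {S : ℕ → Ω → ℕ}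
    (hmeas : ∀ i, Measurable (S i)) (hindep : iIndepFun S P)
    (hident : ∀ i, IdentDistrib (S i) (S 0) P P) (k : ℕ) :
    pmfSeries P (∑ j ∈ range k, S j) = pmfSeries P (S 0) ^ k := by
  induction k with
  | zero => simp [pmfSeries_zero]
  | succ k ih =>
    rw [sum_range_succ, (hindep.indepFun_sum_range_succ hmeas k).pmfSeries_add
      (by fun_prop) (hmeas k), ih, (hident k).pmfSeries_eq, pow_succ]

end ProbabilityTheory

lemma strictMono_sum_range {f : ℕ → ℕ} (hf : ∀ i, 0 < f i) :
    StrictMono fun K => ∑ j ∈ range K, f j :=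
  strictMono_nat_of_lt_succ fun K => by
    rw [sum_range_succ]
    exact Nat.lt_add_of_pos_right (hf K)

lemma exists_sum_range_eq_iff {f : ℕ → ℕ} (hf : ∀ i, 0 < f i) {n : ℕ} (hn : 1 ≤ n) :
    (∃ K, ∑ j ∈ range K, f j = n) ↔ ∃ K ∈ Icc 1 n, ∑ j ∈ range K, f j = n := by
  refine ⟨fun ⟨K, hK⟩ => ⟨K, mem_Icc.mpr ⟨?_, ?_⟩, hK⟩, fun ⟨K, _, hK⟩ => ⟨K, hK⟩⟩
  · rcases K with _ | K
    · rw [range_zero, sum_empty] at hK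
      omega
    · omega
  · exact hK ▸ (strictMono_sum_range hf).le_apply

lemma measureReal_exists_sum_range_eq {Ω : Type*} [MeasurableSpace Ω] {P : Measure Ω}
    [IsFiniteMeasure P] {S : ℕ → Ω → ℕ} (hmeas : ∀ i, Measurable (S i))
    (hpos : ∀ i ω, 0 < S i ω) {n : ℕ} (hn : 1 ≤ n) :
    P.real {ω | ∃ K, ∑ j ∈ range K, S j ω = n}
      = ∑ k ∈ Icc 1 n, P.real ((∑ j ∈ range k, S j) ⁻¹' {n}) := by
  have hunion : {ω | ∃ K, ∑ j ∈ range K, S j ω = n}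
      = ⋃ k ∈ Icc 1 n, (∑ j ∈ range k, S j) ⁻¹' {n} := by
    ext ω
    simpa [Finset.sum_apply] using exists_sum_range_eq_iff (hpos · ω) hn
  have hdisj : (Icc 1 n : Set ℕ).PairwiseDisjoint fun k => (∑ j ∈ range k, S j) ⁻¹' {n} := by
    intro k _ k' _ hne
    refine Set.disjoint_left.mpr fun ω hω hω' => hne ?_
    refine (strictMono_sum_range (hpos · ω)).injective ?_
    simp_all [Finset.sum_apply]
  have hmeas_sum (k : ℕ) : Measurable (∑ j ∈ range k, S j) := by fun_prop
  rw [hunion, measureReal_biUnion_finset hdisj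
    fun k _ => hmeas_sum k (measurableSet_singleton n)]

theorem esc_nb_prob_event_general
    {Ω : Type*} [MeasurableSpace Ω] (P : Measure Ω) [IsProbabilityMeasure P]
    (S : ℕ → Ω → ℕ)
    (hmeas : ∀ i, Measurable (S i))
    (hindep : iIndepFun S P)
    (hident : ∀ i, IdentDistrib (S i) (S 0) P P)
    (hpos : ∀ i ω, 0 < S i ω)
    (μ : ℕ → ℝ)
    (hμ : ∀ s, μ s = (P {ω | S 0 ω = s}).toReal)
    (E : ℕ → Set Ω)
    (hE : ∀ n, E n = {ω | ∃ K, ∑ j ∈ Finset.range K, S j ω = n})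
    (p r : ℝ) (hp0 : 0 < p)
    (hform : ∀ k : ℕ, 1 ≤ k →
      μ k = genChoose ((k : ℝ) + r - 2) (k - 1) * (1 - p) ^ r * p ^ (k - 1))
    (n : ℕ) (hn : 1 ≤ n) :
    (P (E n)).toReal
      = p ^ n * ∑ k ∈ Finset.Icc 1 n,
          ((1 - p) ^ r / p) ^ k *
            genChoose ((n : ℝ) + k * (r - 1) - 1) (n - k) := by
  have hS0 : pmfSeries P (S 0) = shiftedNegBinomialSeries ((1 - p) ^ r) p r := by
    refine mk_eq_shiftedNegBinomialSeries ?_ fun k hk => (hμ k).symm.trans (hform k hk)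
    rw [Set.eq_empty_of_forall_notMem (s := S 0 ⁻¹' {0}) fun ω hω => (hpos 0 ω).ne' hω,
      measureReal_empty]
  rw [hE, ← measureReal_def, measureReal_exists_sum_range_eq hmeas hpos hn, mul_sum]
  refine sum_congr rfl fun k hk => ?_
  have hkn := (mem_Icc.mp hk).2
  have hcoeff := congrArg (coeff n) (iIndepFun.pmfSeries_sum_range hmeas hindep hident k)
  rw [hS0, coeff_shiftedNegBinomialSeries_pow _ _ _ hkn, pmfSeries, coeff_mk] at hcoeff
  rw [hcoeff, div_pow, pow_sub₀ p hp0.ne' hkn]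
  field_simp

/-- If cluster sizes are shifted negative binomial,
`μ_k = C(k+r−2, k−1)(1−p)^r p^{k−1}` for `k ≥ 1` with `p ∈ (0,1)` and `r > 0`, then
for every `n ≥ 1`,
`P[E_n] = p^n ∑_{k=1}^n ((1−p)^r/p)^k C(n + k(r−1) − 1, n−k)`. -/
theorem esc_nb_prob_event
    {Ω : Type*} [MeasurableSpace Ω] (P : Measure Ω) [IsProbabilityMeasure P]
    (S : ℕ → Ω → ℕ)
    (hmeas : ∀ i, Measurable (S i))
    (hindep : iIndepFun S P)
    (hident : ∀ i, IdentDistrib (S i) (S 0) P P)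
    (hpos : ∀ i ω, 0 < S i ω)
    (μ : ℕ → ℝ)
    (hμ : ∀ s, μ s = (P {ω | S 0 ω = s}).toReal)
    (E : ℕ → Set Ω)
    (hE : ∀ n, E n = {ω | ∃ K, ∑ j ∈ Finset.range K, S j ω = n})
    (p r : ℝ) (hp0 : 0 < p) (hp1 : p < 1) (hr : 0 < r)
    (hform : ∀ k : ℕ, 1 ≤ k →
      μ k = genChoose ((k : ℝ) + r - 2) (k - 1) * (1 - p) ^ r * p ^ (k - 1))
    (n : ℕ) (hn : 1 ≤ n) :
    (P (E n)).toReal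
      = p ^ n * ∑ k ∈ Finset.Icc 1 n,
          ((1 - p) ^ r / p) ^ k *
            genChoose ((n : ℝ) + k * (r - 1) - 1) (n - k) :=
  esc_nb_prob_event_general P S hmeas hindep hident hpos μ hμ E hE p r hp0 hform n hn
end
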